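/- arXiv:cs/0608084 — 9 statements merged into one kernel-verified Lean document; each statement's English description precedes it below -/
import Mathlib

section
/- If U is an upward-closed subset of N^E (with respect to the componentwise order), then there exists k ≥ 1 such that for all c in N^E, c ∈ U if and only if τ_k(c) ∈ U. -/
/-!
By Dickson's lemma `ℕ^E` is well-quasi-ordered, so the minimal elements of `U` form a finite
antichain and every element of `U` lies above one of them. Any `k` bounding all coordinates of
these minimal elements works: if `m ≤ c` with `m` minimal, then also `m ≤ τ_k(c)`.
-/

/-- k-truncation of a vector in ℕ^E: each component is capped at k. -/
def trunc {E : Type*} (k : ℕ) (c : E → ℕ) : E → ℕ := fun e => min k (c e)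

open Set

theorem Set.finite_setOf_minimal {α : Type*} [PartialOrder α] [WellQuasiOrderedLE α]
    (s : Set α) : {x | Minimal (· ∈ s) x}.Finite :=
  WellQuasiOrderedLE.finite_of_isAntichain (setOfPred_minimal_antichain _)

section Truncation

variable {E : Type*}

theorem trunc_le (k : ℕ) (c : E → ℕ) : trunc k c ≤ c :=
  fun _ => min_le_right _ _

theorem le_trunc_of_le {k : ℕ} {m c : E → ℕ} (hmk : ∀ e, m e ≤ k) (hmc : m ≤ c) :
    m ≤ trunc k c :=
  fun e => le_min (hmk e) (hmc e)

theorem Set.Finite.exists_forall_apply_le [Finite E] {s : Set (E → ℕ)} (hs : s.Finite) :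
    ∃ k, ∀ m ∈ s, ∀ e, m e ≤ k := by
  obtain ⟨b, hb⟩ := hs.bddAbove
  obtain ⟨k, hk⟩ := (finite_range b).bddAbove
  exact ⟨k, fun m hm e => (hb hm e).trans (hk (mem_range_self e))⟩

theorem IsUpperSet.mem_iff_trunc_mem [Finite E] {U : Set (E → ℕ)} (hU : IsUpperSet U)
    {k : ℕ} (hk : ∀ m, Minimal (· ∈ U) m → ∀ e, m e ≤ k) (c : E → ℕ) :
    c ∈ U ↔ trunc k c ∈ U := by
  refine ⟨fun hc => ?_, fun hc => hU (trunc_le k c) hc⟩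
  obtain ⟨m, hmc, hm⟩ := (isPWO_of_wellQuasiOrderedLE U).exists_le_minimal hc
  exact hU (le_trunc_of_le (hk m hm) hmc) hm.prop

end Truncation

theorem upward_closed_determined_by_truncation_general {E : Type*} [Fintype E]
    (U : Set (E → ℕ)) (hU : ∀ c d : E → ℕ, c ∈ U → c ≤ d → d ∈ U) :
    ∃ k : ℕ, 1 ≤ k ∧ ∀ c : E → ℕ, c ∈ U ↔ trunc k c ∈ U := by
  obtain ⟨k, hk⟩ := (finite_setOf_minimal U).exists_forall_apply_le
  have hUpper : IsUpperSet U := fun c d hcd hc => hU c d hc hcd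
  exact ⟨k + 1, Nat.le_add_left 1 k,
    hUpper.mem_iff_trunc_mem fun m hm e => (hk m hm e).trans k.le_succ⟩

/-- For an upward-closed subset U of ℕ^E there is a truncation level k ≥ 1 such
that membership in U is determined by the k-truncation. -/
theorem upward_closed_determined_by_truncation {E : Type*} [Fintype E] [Nonempty E]
    (U : Set (E → ℕ)) (hU : ∀ c d : E → ℕ, c ∈ U → c ≤ d → d ∈ U) :
    ∃ k : ℕ, 1 ≤ k ∧ ∀ c : E → ℕ, c ∈ U ↔ trunc k c ∈ U :=
  upward_closed_determined_by_truncation_general U hU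
end

section
/- In an additive transition system, the set of output-unstable configurations is upward closed: if c ≤ d (so d = c + r for some r ∈ N^E) and c is output unstable, then d is output unstable. -/
/-- Reachability: reflexive-transitive closure of the step relation. -/
def Reaches {E : Type*} (step : (E → ℕ) → (E → ℕ) → Prop) : (E → ℕ) → (E → ℕ) → Prop :=
  Relation.ReflTransGen step

/-- c is output stable with output b: every configuration reachable from c
(including c itself) has all present elements mapping to output b. -/
def OutputStable {E : Type*} (step : (E → ℕ) → (E → ℕ) → Prop) (o : E → Bool)
    (b : Bool) (c : E → ℕ) : Prop :=
  ∀ d, Reaches step c d → ∀ e, 1 ≤ d e → o e = b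

/-- c is output unstable if it is not output stable with any output. -/
def OutputUnstable {E : Type*} (step : (E → ℕ) → (E → ℕ) → Prop) (o : E → Bool)
    (c : E → ℕ) : Prop :=
  ¬ ∃ b, OutputStable step o b c

/-- In an additive transition system, the set of output-unstable configurations
is upward closed under the componentwise order. -/
theorem outputUnstable_upward_closed {E : Type*} [Fintype E] [Nonempty E]
    (step : (E → ℕ) → (E → ℕ) → Prop)
    (hadd : ∀ c c' d : E → ℕ, step c c' → step (c + d) (c' + d))
    (o : E → Bool) (c d : E → ℕ) (hc : c ≠ 0) (hd : d ≠ 0)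
    (hle : c ≤ d) (hU : OutputUnstable step o c) :
    OutputUnstable step o d := by
  rintro ⟨b, hb⟩
  apply hU
  refine ⟨b, ?_⟩
  intro c' hreach
  set r : E → ℕ := fun e => d e - c e with hr
  have hdcr : d = c + r := by
    funext e; simp [hr, Nat.add_sub_cancel' (hle e)]
  have hlift : Reaches step (c + r) (c' + r) := by
    induction hreach with
    | refl => exact Relation.ReflTransGen.refl
    | tail _ hstep ih => exact Relation.ReflTransGen.tail ih (hadd _ _ r hstep)
  intro e he
  exact hb (c' + r) (hdcr ▸ hlift) e (le_trans he (by simp [Pi.add_apply]))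
end

section
/- In an additive transition system, for each configuration c, the set of extensions X(c) = { x ∈ N^Σ : there exists d ≥ c with c + x →* d and τ_k(c) = τ_k(d) } is a submonoid of N^Σ (it contains 0 and is closed under addition). -/
/-- The set of extensions of a configuration c: inputs x (vectors supported on
the input alphabet Sig) such that c + x can reach some d ≥ c with the same
k-truncation as c. -/
def Extensions {E : Type*} (step : (E → ℕ) → (E → ℕ) → Prop) (Sig : Set E)
    (k : ℕ) (c : E → ℕ) : Set (E → ℕ) :=
  {x | (∀ e, x e ≠ 0 → e ∈ Sig) ∧
    ∃ d, c ≤ d ∧ Reaches step (c + x) d ∧ trunc k c = trunc k d}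

theorem Reaches.add_right {E : Type*} {step : (E → ℕ) → (E → ℕ) → Prop}
    (hadd : ∀ c c' d : E → ℕ, step c c' → step (c + d) (c' + d))
    {a b : E → ℕ} (d : E → ℕ) (h : Reaches step a b) : Reaches step (a + d) (b + d) := by
  induction h with
  | refl => exact .refl
  | tail _ hstep ih => exact ih.tail (hadd _ _ d hstep)

theorem trunc_eq_trunc_add_tsub {E : Type*} {k : ℕ} {c d d' : E → ℕ}
    (hcd : c ≤ d) (hcd' : c ≤ d') (htd : trunc k c = trunc k d)
    (htd' : trunc k c = trunc k d') : trunc k c = trunc k (d' + (d - c)) := by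
  funext e
  have h := congrFun htd e
  have h' := congrFun htd' e
  simp only [trunc, Pi.add_apply, Pi.sub_apply] at h h' ⊢
  have := hcd e
  have := hcd' e
  omega

namespace Extensions

variable {E : Type*} {step : (E → ℕ) → (E → ℕ) → Prop} {Sig : Set E} {k : ℕ} {c : E → ℕ}

theorem zero_mem : 0 ∈ Extensions step Sig k c :=
  ⟨fun _ h => absurd rfl h, c, le_rfl, by rw [add_zero]; exact .refl, rfl⟩

theorem add_mem (hadd : ∀ c c' d : E → ℕ, step c c' → step (c + d) (c' + d))
    {x y : E → ℕ} (hx : x ∈ Extensions step Sig k c) (hy : y ∈ Extensions step Sig k c) :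
    x + y ∈ Extensions step Sig k c := by
  obtain ⟨hxSig, d, hcd, hrx, htd⟩ := hx
  obtain ⟨hySig, d', hcd', hry, htd'⟩ := hy
  have hsupp : ∀ e, (x + y) e ≠ 0 → e ∈ Sig := fun e he => by
    by_cases hxe : x e = 0
    · exact hySig e fun hye => he (by simp [hxe, hye])
    · exact hxSig e hxe
  have hdy : d + y = c + y + (d - c) := by
    rw [add_right_comm, add_tsub_cancel_of_le hcd]
  have hreach : Reaches step (c + (x + y)) (d' + (d - c)) := by
    rw [← add_assoc]
    exact (hrx.add_right hadd y).trans (hdy ▸ hry.add_right hadd (d - c))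
  exact ⟨hsupp, d' + (d - c), hcd'.trans le_self_add, hreach,
    trunc_eq_trunc_add_tsub hcd hcd' htd htd'⟩

end Extensions

theorem extensions_monoid_general {E : Type*} (Sig : Set E)
    (step : (E → ℕ) → (E → ℕ) → Prop)
    (hadd : ∀ c c' d : E → ℕ, step c c' → step (c + d) (c' + d))
    (k : ℕ) (c : E → ℕ) :
    0 ∈ Extensions step Sig k c ∧
      ∀ x y, x ∈ Extensions step Sig k c → y ∈ Extensions step Sig k c →
        x + y ∈ Extensions step Sig k c :=
  ⟨Extensions.zero_mem, fun _ _ => Extensions.add_mem hadd⟩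

/-- In an additive transition system, the set of extensions X(c) is a submonoid
of ℕ^Σ: it contains 0 and is closed under addition. -/
theorem extensions_monoid {E : Type*} [Fintype E] (Sig : Set E)
    (step : (E → ℕ) → (E → ℕ) → Prop)
    (hadd : ∀ c c' d : E → ℕ, step c c' → step (c + d) (c' + d))
    (k : ℕ) (hk : 1 ≤ k) (c : E → ℕ) :
    0 ∈ Extensions step Sig k c ∧
      ∀ x y, x ∈ Extensions step Sig k c → y ∈ Extensions step Sig k c →
        x + y ∈ Extensions step Sig k c :=
  extensions_monoid_general Sig step hadd k c
end

section
/- The monoid M = {(i,j) ∈ N² : i ≤ √2 · j} is not finitely generated as a submonoid of Z². -/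
/-- The monoid M = {(i,j) ∈ ℕ² : i ≤ √2·j}, viewed inside ℤ². -/
def Msqrt2 : Set (ℤ × ℤ) :=
  {p | 0 ≤ p.1 ∧ 0 ≤ p.2 ∧ (p.1 : ℝ) ≤ Real.sqrt 2 * (p.2 : ℝ)}

/-! A finite subset of `Msqrt2` lies in a half-plane `i ≤ r j` with `r < √2`, because by
irrationality of `√2` no nonzero lattice point lies on the boundary line `i = √2 j`. That
half-plane is a submonoid, so it contains everything generated, yet it misses the points
`(⌊√2 n⌋, n)` of `Msqrt2` once `n (√2 - r) > 1`. -/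

open Topology

def halfPlane (r : ℝ) : AddSubmonoid (ℤ × ℤ) where
  carrier := {p | (p.1 : ℝ) ≤ r * p.2}
  zero_mem' := by simp
  add_mem' {p q} (hp : (p.1 : ℝ) ≤ r * p.2) (hq : (q.1 : ℝ) ≤ r * q.2) := by
    show ((p.1 + q.1 : ℤ) : ℝ) ≤ r * ((p.2 + q.2 : ℤ) : ℝ)
    push_cast
    linarith

theorem Irrational.eq_zero_of_intCast_eq_mul {α : ℝ} (hα : Irrational α) {i j : ℤ}
    (h : (i : ℝ) = α * j) : (i, j) = 0 := by
  obtain rfl : j = 0 := by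
    by_contra hj
    exact (hα.mul_intCast hj).ne_int i h.symm
  simpa using h

theorem eq_zero_or_lt_mul_of_le_mul {α : ℝ} (hα : Irrational α) {p : ℤ × ℤ}
    (hp : (p.1 : ℝ) ≤ α * p.2) : p = 0 ∨ (p.1 : ℝ) < α * p.2 :=
  hp.eq_or_lt.imp_left hα.eq_zero_of_intCast_eq_mul

theorem Finset.exists_lt_forall_le_mul {α : ℝ} (A : Finset (ℤ × ℤ))
    (hA : ∀ p ∈ A, p = 0 ∨ (p.1 : ℝ) < α * p.2) :
    ∃ r < α, ∀ p ∈ A, (p.1 : ℝ) ≤ r * p.2 := by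
  have hev : ∀ p ∈ A, ∀ᶠ r in 𝓝[<] α, (p.1 : ℝ) ≤ r * p.2 := by
    intro p hp
    rcases hA p hp with rfl | hlt
    · exact Filter.Eventually.of_forall fun r => by simp
    · have hcont : Filter.Tendsto (fun r : ℝ => r * p.2) (𝓝[<] α) (𝓝 (α * p.2)) :=
        ((continuous_id.mul continuous_const).tendsto α).mono_left nhdsWithin_le_nhds
      exact (hcont.eventually_const_lt hlt).mono fun r => le_of_lt
  obtain ⟨r, hr, hrA⟩ :=
    ((Filter.eventually_all_finset A).mpr hev).and self_mem_nhdsWithin |>.exists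
  exact ⟨r, hrA, hr⟩

theorem exists_nat_mul_lt_floor_mul {r α : ℝ} (h : r < α) : ∃ n : ℕ, r * n < ⌊α * n⌋ := by
  obtain ⟨n, hn⟩ := exists_nat_gt (1 / (α - r))
  refine ⟨n, ?_⟩
  have hgap : 1 < (α - r) * n := by rwa [div_lt_iff₀' (sub_pos.mpr h)] at hn
  linarith [Int.sub_one_lt_floor (α * n)]

theorem floor_sqrt_two_mul_mem_Msqrt2 (n : ℕ) : (⌊Real.sqrt 2 * n⌋, (n : ℤ)) ∈ Msqrt2 :=
  ⟨Int.floor_nonneg.mpr (by positivity), by positivity, by simpa using Int.floor_le _⟩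

/-- M is not finitely generated as a submonoid of ℤ²: there is no finite subset
A of M such that every element of M is a finite sum of elements of A. -/
theorem Msqrt2_not_finitely_generated :
    ¬ ∃ A : Finset (ℤ × ℤ), (A : Set (ℤ × ℤ)) ⊆ Msqrt2 ∧
      ∀ m ∈ Msqrt2, m ∈ AddSubmonoid.closure (A : Set (ℤ × ℤ)) := by
  rintro ⟨A, hAM, hgen⟩
  obtain ⟨r, hr, hAr⟩ := A.exists_lt_forall_le_mul fun p hp =>
    eq_zero_or_lt_mul_of_le_mul irrational_sqrt_two (hAM hp).2.2
  have hclosure : AddSubmonoid.closure (A : Set (ℤ × ℤ)) ≤ halfPlane r :=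
    AddSubmonoid.closure_le.mpr hAr
  obtain ⟨n, hn⟩ := exists_nat_mul_lt_floor_mul hr
  have hle : ((⌊Real.sqrt 2 * n⌋ : ℤ) : ℝ) ≤ r * (n : ℤ) :=
    hclosure (hgen _ (floor_sqrt_two_mul_mem_Msqrt2 n))
  push_cast at hle
  exact hle.not_gt hn
end

section
/- A subset of N^d is semilinear if and only if its complement (in N^d) is semilinear. -/
/-- A linear subset of ℕ^d: a base point plus all ℕ-combinations of finitely
many period vectors. -/
def IsLinear {d : ℕ} (S : Set (Fin d → ℕ)) : Prop :=
  ∃ (b : Fin d → ℕ) (P : Finset (Fin d → ℕ)),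
    S = (fun m => b + m) '' (AddSubmonoid.closure (P : Set (Fin d → ℕ)) : Set (Fin d → ℕ))

/-- A semilinear subset of ℕ^d: a finite union of linear sets. -/
def IsSemilinear {d : ℕ} (S : Set (Fin d → ℕ)) : Prop :=
  ∃ (n : ℕ) (L : Fin n → Set (Fin d → ℕ)), (∀ i, IsLinear (L i)) ∧ S = ⋃ i, L i

theorem isLinear_iff_isLinearSet {d : ℕ} {S : Set (Fin d → ℕ)} : IsLinear S ↔ IsLinearSet S :=
  isLinearSet_iff.symm

theorem isSemilinear_iff_isSemilinearSet {d : ℕ} {S : Set (Fin d → ℕ)} :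
    IsSemilinear S ↔ IsSemilinearSet S := by
  constructor
  · rintro ⟨n, L, hL, rfl⟩
    exact .iUnion fun i => (isLinear_iff_isLinearSet.mp (hL i)).isSemilinearSet
  · rintro ⟨F, hF, hlin, rfl⟩
    obtain ⟨n, L, rfl⟩ := hF.fin_embedding
    exact ⟨n, L, fun i => isLinear_iff_isLinearSet.mpr (hlin _ ⟨i, rfl⟩), Set.sUnion_range L⟩

/-- A subset of ℕ^d is semilinear iff its complement is semilinear. -/
theorem semilinear_iff_compl_semilinear {d : ℕ} (S : Set (Fin d → ℕ)) :
    IsSemilinear S ↔ IsSemilinear Sᶜ := by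
  simp only [isSemilinear_iff_isSemilinearSet]
  exact ⟨IsSemilinearSet.compl, fun h => compl_compl S ▸ h.compl⟩
end

section
/- Let G be a subgroup of Z^d, let M and N be submonoids of G, and let a, b ∈ Z^d be such that the cosets a + M and b + N are disjoint. Let K be the subgroup of Z^d generated by M ∩ N. Then no coset of K intersects both a + M and b + N. -/
/-! A common coset `v + K` meets `a + M` in `a + m` and `b + N` in `b + n`, so
`(b + n) - (a + m) ∈ K` is a difference `y' - y` of elements of `M ∩ N`. Then
`a + (m + y') = b + (n + y)` lies in both `a + M` and `b + N`. -/

namespace AddSubmonoid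

variable {A : Type*} [AddCommGroup A]

theorem exists_sub_eq_of_mem_addSubgroupClosure (S : AddSubmonoid A) {k : A}
    (hk : k ∈ AddSubgroup.closure (S : Set A)) : ∃ y ∈ S, ∃ y' ∈ S, y' - y = k := by
  induction hk using AddSubgroup.closure_induction with
  | mem x hx => exact ⟨0, S.zero_mem, x, hx, sub_zero x⟩
  | zero => exact ⟨0, S.zero_mem, 0, S.zero_mem, sub_zero 0⟩
  | add x z _ _ ihx ihz =>
    obtain ⟨y₁, hy₁, y₁', hy₁', rfl⟩ := ihx
    obtain ⟨y₂, hy₂, y₂', hy₂', rfl⟩ := ihz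
    exact ⟨y₁ + y₂, S.add_mem hy₁ hy₂, y₁' + y₂', S.add_mem hy₁' hy₂', by abel⟩
  | neg x _ ihx =>
    obtain ⟨y, hy, y', hy', rfl⟩ := ihx
    exact ⟨y', hy', y, hy, (neg_sub y' y).symm⟩

theorem exists_add_eq_add_of_sub_mem_closure_inf (M N : AddSubmonoid A) {a b m n : A}
    (hm : m ∈ M) (hn : n ∈ N)
    (hK : (b + n) - (a + m) ∈ AddSubgroup.closure ((M ⊓ N : AddSubmonoid A) : Set A)) :
    ∃ m' ∈ M, ∃ n' ∈ N, a + m' = b + n' := by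
  obtain ⟨y, hy, y', hy', hyy'⟩ := (M ⊓ N).exists_sub_eq_of_mem_addSubgroupClosure hK
  refine ⟨m + y', M.add_mem hm (mem_inf.mp hy').1, n + y, N.add_mem hn (mem_inf.mp hy).2, ?_⟩
  rw [sub_eq_sub_iff_add_eq_add] at hyy'
  calc a + (m + y') = y' + (a + m) := by abel
    _ = (b + n) + y := hyy'
    _ = b + (n + y) := add_assoc b n y

end AddSubmonoid

theorem no_coset_meets_both_general {d : ℕ}
    (M N : AddSubmonoid (Fin d → ℤ))
    (a b : Fin d → ℤ)
    (hdisj : Disjoint ((fun m => a + m) '' (M : Set (Fin d → ℤ)))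
                      ((fun m => b + m) '' (N : Set (Fin d → ℤ)))) :
    ∀ v : Fin d → ℤ,
      ¬ (∃ p, p ∈ (fun m => v + m) '' (AddSubgroup.closure ((M : Set (Fin d → ℤ)) ∩ N) : Set (Fin d → ℤ)) ∧
              p ∈ (fun m => a + m) '' (M : Set (Fin d → ℤ))) ∨
      ¬ (∃ q, q ∈ (fun m => v + m) '' (AddSubgroup.closure ((M : Set (Fin d → ℤ)) ∩ N) : Set (Fin d → ℤ)) ∧
              q ∈ (fun m => b + m) '' (N : Set (Fin d → ℤ))) := by
  intro v
  rw [← not_and_or]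
  rintro ⟨⟨_, ⟨k₁, hk₁, rfl⟩, m, hm, hvm⟩, ⟨_, ⟨k₂, hk₂, rfl⟩, n, hn, hvn⟩⟩
  have hK : (b + n) - (a + m) ∈ AddSubgroup.closure ((M ⊓ N : AddSubmonoid _) : Set _) := by
    simp only at hvm hvn
    rw [hvm, hvn, add_sub_add_left_eq_sub]
    exact sub_mem hk₂ hk₁
  obtain ⟨m', hm', n', hn', h⟩ := M.exists_add_eq_add_of_sub_mem_closure_inf N hm hn hK
  exact Set.disjoint_left.mp hdisj ⟨m', hm', rfl⟩ ⟨n', hn', h.symm⟩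

/-- If the monoid cosets a + M and b + N are disjoint, then no coset of the
group K generated by M ∩ N intersects both a + M and b + N. -/
theorem no_coset_meets_both {d : ℕ} (G : AddSubgroup (Fin d → ℤ))
    (M N : AddSubmonoid (Fin d → ℤ))
    (hM : (M : Set (Fin d → ℤ)) ⊆ G) (hN : (N : Set (Fin d → ℤ)) ⊆ G)
    (a b : Fin d → ℤ)
    (hdisj : Disjoint ((fun m => a + m) '' (M : Set (Fin d → ℤ)))
                      ((fun m => b + m) '' (N : Set (Fin d → ℤ)))) :
    ∀ v : Fin d → ℤ,
      ¬ (∃ p, p ∈ (fun m => v + m) '' (AddSubgroup.closure ((M : Set (Fin d → ℤ)) ∩ N) : Set (Fin d → ℤ)) ∧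
              p ∈ (fun m => a + m) '' (M : Set (Fin d → ℤ))) ∨
      ¬ (∃ q, q ∈ (fun m => v + m) '' (AddSubgroup.closure ((M : Set (Fin d → ℤ)) ∩ N) : Set (Fin d → ℤ)) ∧
              q ∈ (fun m => b + m) '' (N : Set (Fin d → ℤ))) :=
  no_coset_meets_both_general M N a b hdisj
end

section
/- Let M and N be submonoids of a subgroup G of Z^d such that the real cone R₊M ∩ R₊N spans the real vector space R·G (the real span of G). Then the subgroup generated by M ∩ N has full rank in G, i.e., its real span equals R·G. -/
/-!
Write `x ∈ ℝ₊M ∩ ℝ₊N` as `x = ∑ cᵢ mᵢ = ∑ eⱼ nⱼ`. The coefficient vector `z = (c, e)` is a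
nonnegative real linear relation among the integer vectors `mᵢ, -nⱼ`, and such relations are real
combinations of nonnegative rational, hence (clearing denominators) natural, relations `p`. The
linear map `(c, e) ↦ ∑ cᵢ mᵢ` sends `z` to `x` and each natural relation `p` to
`∑ pᵢ mᵢ = ∑ pⱼ nⱼ ∈ M ∩ N`.

For the rational step, expand the coordinates of `z` in a basis of the `ℚ`-span they generate:
`z = ∑ w_s q_s` with rational relations `q_s` vanishing wherever `z` does. Replacing `w` by a nearby
rational vector gives a rational relation `q₀ ≥ 0` with the same support as `z`, and then
`q_s = (q_s + K q₀) - K q₀` with `q_s + K q₀ ≥ 0` for large `K`.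
-/

/-- The cone of finite nonnegative real combinations of elements of Y. -/
def NonnegCone {d : ℕ} (Y : Set (Fin d → ℝ)) : Set (Fin d → ℝ) :=
  {x | ∃ (n : ℕ) (c : Fin n → ℝ) (y : Fin n → (Fin d → ℝ)),
        (∀ i, 0 ≤ c i) ∧ (∀ i, y i ∈ Y) ∧ x = ∑ i, c i • y i}

/-- Coordinatewise embedding of ℤ^d into ℝ^d. -/
def intToReal {d : ℕ} (v : Fin d → ℤ) : Fin d → ℝ := fun i => (v i : ℝ)

theorem exists_coordinates {K V ι : Type*} [DivisionRing K] [AddCommGroup V] [Module K V]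
    [Finite ι] (x : ι → V) :
    ∃ (r : ℕ) (w : Fin r → V) (φ : Fin r → V →ₗ[K] K), ∀ i, x i = ∑ s, φ s (x i) • w s := by
  let W := Submodule.span K (Set.range x)
  have : FiniteDimensional K W := FiniteDimensional.span_of_finite K (Set.finite_range x)
  let b := Module.finBasis K W
  choose φ hφ using fun s => LinearMap.exists_extend (b.coord s)
  refine ⟨_, fun s => b s, φ, fun i => ?_⟩
  have hx : x i ∈ W := Submodule.subset_span (Set.mem_range_self i)
  have hφx : ∀ s, φ s (x i) = b.coord s ⟨x i, hx⟩ := fun s =>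
    LinearMap.congr_fun (hφ s) ⟨x i, hx⟩
  have hsum := congrArg Subtype.val (b.sum_repr ⟨x i, hx⟩)
  simp only [Submodule.coe_sum, Submodule.coe_smul] at hsum
  simpa [hφx] using hsum.symm

theorem exists_rat_forall_pos {ι σ : Type*} [Finite ι] (L : ι → (σ → ℝ) → ℝ)
    (hL : ∀ i, Continuous (L i)) {w : σ → ℝ} (hw : ∀ i, 0 < L i w) :
    ∃ ρ : σ → ℚ, ∀ i, 0 < L i (Rat.cast ∘ ρ) := by
  have hopen : IsOpen {y | ∀ i, 0 < L i y} := by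
    simp only [Set.ofPred_forall]
    exact isOpen_iInter_of_finite fun i => isOpen_lt continuous_const (hL i)
  exact (DenseRange.piMap fun _ => Rat.denseRange_cast).exists_mem_open hopen ⟨w, hw⟩

theorem exists_nonneg_add_smul {ι 𝕜 : Type*} [Finite ι] [Field 𝕜] [LinearOrder 𝕜]
    [IsStrictOrderedRing 𝕜] {u v : ι → 𝕜} (hu : 0 ≤ u) (hv : ∀ i, u i = 0 → v i = 0) :
    ∃ K : 𝕜, 0 ≤ v + K • u := by
  suffices ∀ᶠ K in Filter.atTop, ∀ i, 0 ≤ v i + K * u i from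
    this.exists.imp fun K hK i => hK i
  refine Filter.eventually_all.2 fun i => ?_
  rcases (hu i).eq_or_lt with hui | hui
  · simp [← hui, hv i hui.symm]
  · exact (Filter.tendsto_atTop_add_const_left _ (v i)
      (Filter.tendsto_id.atTop_mul_const hui)).eventually_ge_atTop 0

section Relations

variable {ι κ : Type*} [Fintype ι]

def linearRelations (R : Type*) [Ring R] (v : ι → κ → ℤ) : Submodule R (ι → R) :=
  LinearMap.ker (Fintype.linearCombination R fun i k => (v i k : R))

theorem mem_linearRelations {R : Type*} [Ring R] {v : ι → κ → ℤ} {z : ι → R} :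
    z ∈ linearRelations R v ↔ ∑ i, z i • (fun k => (v i k : R)) = 0 := by
  rw [linearRelations, LinearMap.mem_ker, Fintype.linearCombination_apply]

theorem comp_mem_linearRelations {R : Type*} [Ring R] [Module ℚ R] (v : ι → κ → ℤ)
    (φ : R →ₗ[ℚ] ℚ) {z : ι → R}
    (hz : z ∈ linearRelations R v) : φ ∘ z ∈ linearRelations ℚ v := by
  rw [mem_linearRelations] at hz ⊢
  funext k
  have := congrArg φ (congrFun hz k)
  simp only [Finset.sum_apply, Pi.smul_apply, smul_eq_mul, map_sum, Pi.zero_apply,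
    map_zero] at this ⊢
  have hφ : ∀ i, φ (z i * v i k) = φ (z i) * v i k := fun i => by
    rw [← zsmul_eq_mul', map_zsmul, zsmul_eq_mul']
  simpa only [hφ, Function.comp_apply] using this

def nonnegRelations (𝕜 : Type*) [Ring 𝕜] [PartialOrder 𝕜] (v : ι → κ → ℤ) : Set (ι → 𝕜) :=
  Set.Ici 0 ∩ linearRelations 𝕜 v

theorem ratCast_mem_span_nonnegRelations (v : ι → κ → ℤ) {q₀ q : ι → ℚ}
    (hq₀ : q₀ ∈ nonnegRelations ℚ v) (hq : q ∈ linearRelations ℚ v)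
    (hsupp : ∀ i, q₀ i = 0 → q i = 0) :
    ((↑) ∘ q : ι → ℝ) ∈
      Submodule.span ℝ ((Rat.cast ∘ · : (ι → ℚ) → ι → ℝ) '' nonnegRelations ℚ v) := by
  obtain ⟨K, hK⟩ := exists_nonneg_add_smul hq₀.1 hsupp
  have hq_eq : ((↑) ∘ q : ι → ℝ) = (↑) ∘ (q + K • q₀) - (K : ℝ) • (↑) ∘ q₀ := by
    ext i; simp
  rw [hq_eq]
  exact Submodule.sub_mem _
    (Submodule.subset_span
      ⟨_, ⟨hK, Submodule.add_mem _ hq (Submodule.smul_mem _ _ hq₀.2)⟩, rfl⟩)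
    (Submodule.smul_mem _ _ (Submodule.subset_span ⟨q₀, hq₀, rfl⟩))

theorem nonnegRelations_real_subset_span_rat (v : ι → κ → ℤ) :
    nonnegRelations ℝ v ⊆
      Submodule.span ℝ ((Rat.cast ∘ · : (ι → ℚ) → ι → ℝ) '' nonnegRelations ℚ v) := by
  rintro z ⟨hz0, hz⟩
  obtain ⟨r, w, φ, hzw⟩ := exists_coordinates (K := ℚ) z
  simp only [Rat.smul_def] at hzw
  set q : Fin r → ι → ℚ := fun s => φ s ∘ z
  have hq : ∀ s, q s ∈ linearRelations ℚ v := fun s => comp_mem_linearRelations v (φ s) hz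
  have hq_zero : ∀ s i, z i = 0 → q s i = 0 := fun s i h => by simp [q, h]
  obtain ⟨ρ, hρ⟩ := exists_rat_forall_pos (ι := {i // 0 < z i})
    (fun i y => ∑ s, y s * (q s i : ℝ)) (by fun_prop) (w := w)
    (fun i => by have := i.2; rw [hzw] at this; simpa [q, mul_comm] using this)
  set q₀ := ∑ s, ρ s • q s
  have hq₀_pos : ∀ i, 0 < z i → 0 < q₀ i := fun i h => by
    have := hρ ⟨i, h⟩
    simp only [Function.comp_apply] at this
    simp only [q₀, Finset.sum_apply, Pi.smul_apply, smul_eq_mul]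
    exact_mod_cast this
  have hq₀_zero : ∀ i, z i = 0 → q₀ i = 0 := fun i h => by
    simp [q₀, Finset.sum_apply, hq_zero _ i h]
  have hq₀ : q₀ ∈ nonnegRelations ℚ v := by
    refine ⟨fun i => ?_, Submodule.sum_mem _ fun s _ => Submodule.smul_mem _ _ (hq s)⟩
    rcases (hz0 i).eq_or_lt with h | h
    exacts [(hq₀_zero i h.symm).ge, (hq₀_pos i h).le]
  have hz_eq : z = ∑ s, w s • ((↑) ∘ q s : ι → ℝ) := by
    ext i; simpa [q, Finset.sum_apply, mul_comm] using hzw i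
  rw [hz_eq]
  refine Submodule.sum_mem _ fun s _ => Submodule.smul_mem _ _ ?_
  refine ratCast_mem_span_nonnegRelations v hq₀ (hq s) fun i h => ?_
  rcases (hz0 i).eq_or_lt with hi | hi
  exacts [hq_zero s i hi.symm, absurd h (hq₀_pos i hi).ne']

theorem exists_pos_nat_smul_eq_natCast {q : ι → ℚ} (hq : 0 ≤ q) :
    ∃ (D : ℕ) (p : ι → ℕ), 0 < D ∧ (D : ℚ) • q = (↑) ∘ p := by
  have hint : ∀ i, ∃ n : ℕ, (∏ j, (q j).den : ℕ) * q i = n := fun i => by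
    obtain ⟨c, hc⟩ := Finset.dvd_prod_of_mem (fun j => (q j).den) (Finset.mem_univ i)
    refine ⟨c * (q i).num.toNat, ?_⟩
    have hnum : ((q i).num.toNat : ℚ) = (q i).num := by
      exact_mod_cast Int.toNat_of_nonneg (Rat.num_nonneg.2 (hq i))
    rw [hc, Nat.cast_mul, Nat.cast_mul, hnum, ← Rat.mul_den_eq_num]
    ring
  choose p hp using hint
  exact ⟨_, p, Finset.prod_pos fun i _ => (q i).den_pos, funext hp⟩

theorem nonnegRelations_rat_subset_span_nat (v : ι → κ → ℤ) :
    (Rat.cast ∘ · : (ι → ℚ) → ι → ℝ) '' nonnegRelations ℚ v ⊆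
      Submodule.span ℝ ((Nat.cast ∘ · : (ι → ℕ) → ι → ℝ) '' {p | ∑ i, p i • v i = 0}) := by
  rintro _ ⟨q, ⟨hq0, hq⟩, rfl⟩
  obtain ⟨D, p, hD, hp⟩ := exists_pos_nat_smul_eq_natCast hq0
  have hp_rel : ∑ i, p i • v i = 0 := by
    rw [SetLike.mem_coe, mem_linearRelations] at hq
    have hpi : ∀ i, (p i : ℚ) = D * q i := fun i => (congrFun hp i).symm
    have hcast : ∑ i, (p i : ℚ) • (fun k => (v i k : ℚ)) = 0 := by
      simp only [hpi, mul_smul, ← Finset.smul_sum, hq, smul_zero]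
    funext k
    have hk := congrFun hcast k
    simp only [Finset.sum_apply, Pi.smul_apply, smul_eq_mul, Pi.zero_apply] at hk ⊢
    exact_mod_cast hk
  have hq_eq : ((↑) ∘ q : ι → ℝ) = (D : ℝ)⁻¹ • ((↑) ∘ p : ι → ℝ) := by
    funext i
    have hpi : (p i : ℝ) = D * q i := by exact_mod_cast (congrFun hp i).symm
    simp [hpi, hD.ne']
  dsimp only
  rw [hq_eq]
  exact Submodule.smul_mem _ _ (Submodule.subset_span ⟨p, hp_rel, rfl⟩)

theorem nonnegRelations_real_subset_span_nat (v : ι → κ → ℤ) :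
    nonnegRelations ℝ v ⊆
      Submodule.span ℝ ((Nat.cast ∘ · : (ι → ℕ) → ι → ℝ) '' {p | ∑ i, p i • v i = 0}) :=
  (nonnegRelations_real_subset_span_rat v).trans
    (Submodule.span_le.2 (nonnegRelations_rat_subset_span_nat v))

end Relations

theorem mem_span_inter_of_mem_nonnegCone_inter {d : ℕ} {M N : AddSubmonoid (Fin d → ℤ)}
    {x : Fin d → ℝ}
    (hx : x ∈ NonnegCone (intToReal '' (M : Set (Fin d → ℤ))) ∩
      NonnegCone (intToReal '' (N : Set (Fin d → ℤ)))) :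
    x ∈ Submodule.span ℝ (intToReal '' ((M : Set (Fin d → ℤ)) ∩ N)) := by
  obtain ⟨⟨k, c, _, hc, hmem, rfl⟩, ⟨l, e, _, he, hnmem, hxe⟩⟩ := hx
  choose m hm hmu using hmem
  choose n hn hnu using hnmem
  obtain rfl : _ = intToReal ∘ m := funext fun i => (hmu i).symm
  obtain rfl : _ = intToReal ∘ n := funext fun j => (hnu j).symm
  let v : Fin k ⊕ Fin l → Fin d → ℤ := Sum.elim m (-n)
  let B := Fintype.linearCombination ℝ (Sum.elim (intToReal ∘ m) (0 : Fin l → Fin d → ℝ))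
  have hz : Sum.elim c e ∈ nonnegRelations ℝ v := by
    refine ⟨fun t => by cases t <;> simp [hc, he], ?_⟩
    rw [SetLike.mem_coe, mem_linearRelations, Fintype.sum_sum_type]
    simp only [v, Sum.elim_inl, Sum.elim_inr, Pi.neg_apply, Int.cast_neg]
    change ∑ i, c i • intToReal (m i) + ∑ j, e j • -intToReal (n j) = 0
    rw [← sub_eq_zero.2 hxe]
    simp only [smul_neg, Finset.sum_neg_distrib, sub_eq_add_neg, Function.comp_apply]
  have hBz : B (Sum.elim c e) = ∑ i, c i • (intToReal ∘ m) i := by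
    simp [B, Fintype.linearCombination_apply, Fintype.sum_sum_type]
  have hB : ∀ p ∈ {p : Fin k ⊕ Fin l → ℕ | ∑ t, p t • v t = 0},
      B ((↑) ∘ p) ∈ intToReal '' ((M : Set (Fin d → ℤ)) ∩ N) := by
    intro p hp
    simp only [Set.mem_ofPred_eq, Fintype.sum_sum_type, v, Sum.elim_inl, Sum.elim_inr,
      Pi.neg_apply, smul_neg, Finset.sum_neg_distrib, ← sub_eq_add_neg, sub_eq_zero] at hp
    refine ⟨∑ i, p (.inl i) • m i, ⟨sum_mem fun i _ => nsmul_mem (hm i) _,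
      hp ▸ sum_mem fun j _ => nsmul_mem (hn j) _⟩, ?_⟩
    ext a
    simp [B, Fintype.linearCombination_apply, Fintype.sum_sum_type, intToReal, Finset.sum_apply]
  have hx := Submodule.mem_map_of_mem (f := B) (nonnegRelations_real_subset_span_nat v hz)
  rw [Submodule.map_span, hBz] at hx
  refine Submodule.span_mono ?_ hx
  rintro _ ⟨_, ⟨p, hp, rfl⟩, rfl⟩
  exact hB p hp

theorem full_rank_of_cones_span_general {d : ℕ} (G : AddSubgroup (Fin d → ℤ))
    (M N : AddSubmonoid (Fin d → ℤ))
    (hM : (M : Set (Fin d → ℤ)) ⊆ G)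
    (hspan : Submodule.span ℝ
        (NonnegCone (intToReal '' (M : Set (Fin d → ℤ))) ∩
         NonnegCone (intToReal '' (N : Set (Fin d → ℤ)))) =
      Submodule.span ℝ (intToReal '' (G : Set (Fin d → ℤ)))) :
    Submodule.span ℝ
        (intToReal '' ((AddSubgroup.closure ((M : Set (Fin d → ℤ)) ∩ N) : AddSubgroup (Fin d → ℤ)) : Set (Fin d → ℤ))) =
      Submodule.span ℝ (intToReal '' (G : Set (Fin d → ℤ))) := by
  refine le_antisymm (Submodule.span_mono (Set.image_mono ?_)) ?_
  · exact (AddSubgroup.closure_le G).2 fun _ hv => hM hv.1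
  · rw [← hspan, Submodule.span_le]
    exact fun x hx => Submodule.span_mono (Set.image_mono AddSubgroup.subset_closure)
      (mem_span_inter_of_mem_nonnegCone_inter hx)

/-- If the intersection of the real cones generated by submonoids M, N ⊆ G
spans the real span of G, then the subgroup generated by M ∩ N has full rank in
G: its real span equals the real span of G. -/
theorem full_rank_of_cones_span {d : ℕ} (G : AddSubgroup (Fin d → ℤ))
    (M N : AddSubmonoid (Fin d → ℤ))
    (hM : (M : Set (Fin d → ℤ)) ⊆ G) (hN : (N : Set (Fin d → ℤ)) ⊆ G)
    (hspan : Submodule.span ℝ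
        (NonnegCone (intToReal '' (M : Set (Fin d → ℤ))) ∩
         NonnegCone (intToReal '' (N : Set (Fin d → ℤ)))) =
      Submodule.span ℝ (intToReal '' (G : Set (Fin d → ℤ)))) :
    Submodule.span ℝ
        (intToReal '' ((AddSubgroup.closure ((M : Set (Fin d → ℤ)) ∩ N) : AddSubgroup (Fin d → ℤ)) : Set (Fin d → ℤ))) =
      Submodule.span ℝ (intToReal '' (G : Set (Fin d → ℤ))) :=
  full_rank_of_cones_span_general G M N hM hspan
end

section
/- Let ψ be a predicate on finite nonempty multisets over a countable alphabet Σ that is stably computable in the anonymous asynchronous message-passing model under the local fairness condition (if some agent sends a message m infinitely often, every agent receives m infinitely often), with unbounded states and message sizes. Then ψ(x) = ψ(x') whenever the multisets x and x' have the same underlying set of values. -/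
/-- A protocol in the anonymous asynchronous message-passing model. -/
structure Protocol (A Msg St : Type*) where
  init : A → St
  send : St → Msg × St
  recv : St → Msg → St
  out : St → Bool

/-- An event: agent i sends a message, or agent i receives message m. -/
inductive Event (n : ℕ) (Msg : Type*) where
  | snd (i : Fin n)
  | rcv (i : Fin n) (m : Msg)

/-- One step of the system: a configuration consists of the agents' states and
the multiset of messages in transit. -/
def StepRel {A Msg St : Type*} [DecidableEq Msg] (P : Protocol A Msg St) {n : ℕ}
    (ev : Event n Msg) (c c' : (Fin n → St) × Multiset Msg) : Prop :=
  match ev with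
  | .snd i => c'.1 = Function.update c.1 i (P.send (c.1 i)).2 ∧
      c'.2 = (P.send (c.1 i)).1 ::ₘ c.2
  | .rcv i m => m ∈ c.2 ∧ c'.1 = Function.update c.1 i (P.recv (c.1 i) m) ∧
      c'.2 = c.2.erase m

/-- An infinite execution of protocol P on a population of n agents with
inputs x. -/
structure Exec {A Msg St : Type*} [DecidableEq Msg] (P : Protocol A Msg St)
    (n : ℕ) (x : Fin n → A) where
  cfg : ℕ → (Fin n → St) × Multiset Msg
  ev : ℕ → Event n Msg
  init_cfg : cfg 0 = (fun i => P.init (x i), 0)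
  step : ∀ t, StepRel P (ev t) (cfg t) (cfg (t + 1))

section
variable {A Msg St : Type*} [DecidableEq Msg] {P : Protocol A Msg St}
  {n : ℕ} {x : Fin n → A}

/-- Agent i sends message m at time t. -/
def SendsAt (e : Exec P n x) (i : Fin n) (m : Msg) (t : ℕ) : Prop :=
  e.ev t = .snd i ∧ (P.send ((e.cfg t).1 i)).1 = m

/-- Agent i receives message m at time t. -/
def RecvAt (e : Exec P n x) (i : Fin n) (m : Msg) (t : ℕ) : Prop :=
  e.ev t = .rcv i m

/-- Agent i takes a step at time t. -/
def ActsAt (e : Exec P n x) (i : Fin n) (t : ℕ) : Prop :=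
  e.ev t = .snd i ∨ ∃ m, e.ev t = .rcv i m

/-- Local fairness: every agent takes infinitely many steps, and if some agent
sends a message m infinitely often then every agent receives m infinitely
often. -/
def LocallyFair (e : Exec P n x) : Prop :=
  (∀ i : Fin n, ∀ T, ∃ t, T ≤ t ∧ ActsAt e i t) ∧
  (∀ m : Msg, (∃ i, ∀ T, ∃ t, T ≤ t ∧ SendsAt e i m t) →
    ∀ j : Fin n, ∀ T, ∃ t, T ≤ t ∧ RecvAt e j m t)

end

/-- The input multiset of a population. -/
def inputMultiset {A : Type*} {n : ℕ} (x : Fin n → A) : Multiset A :=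
  Multiset.map x Finset.univ.val

/-- P stably computes ψ under local fairness: in every locally fair execution,
all agents' outputs eventually stabilize to ψ of the input multiset. -/
def StablyComputes {A Msg St : Type*} [DecidableEq Msg] (P : Protocol A Msg St)
    (ψ : Multiset A → Bool) : Prop :=
  ∀ (n : ℕ), 0 < n → ∀ (x : Fin n → A) (e : Exec P n x), LocallyFair e →
    ∃ T, ∀ t, T ≤ t → ∀ i, P.out ((e.cfg t).1 i) = ψ (inputMultiset x)

/-!
Run a population in lock-step rounds: in every round each agent sends once, and then each
message of a set `D` is received once by every agent. Agents with the same input then always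
share a state, namely the state of a synchronous run over the set `S` of input values, which
does not depend on the size of the population. `D` is read off tallies that count, for every
message, the rounds since its last delivery in which it was sent; a message is delivered once
its tally reaches a threshold `N`. Each of those rounds left a copy in transit, so for
populations of at most `N` agents there are enough copies to deliver, and a message sent
infinitely often would otherwise have an unbounded tally, so the execution is locally fair.
With `N = n + n'`, the executions for `x` and `x'` pass through the same per-value states
at arbitrarily late times, so the stabilized outputs agree.
-/

open Filter

lemma Nat.tendsto_atTop_of_frequently_lt_succ {u : ℕ → ℕ}
    (hmono : ∀ᶠ k in atTop, u k ≤ u (k + 1)) (hinc : ∃ᶠ k in atTop, u k < u (k + 1)) :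
    Tendsto u atTop atTop := by
  obtain ⟨K, hK⟩ := eventually_atTop.1 hmono
  have hmono' {a b : ℕ} (ha : K ≤ a) (hab : a ≤ b) : u a ≤ u b := by
    induction b, hab using Nat.le_induction with
    | base => rfl
    | succ b hab ih => exact ih.trans (hK b (ha.trans hab))
  refine tendsto_atTop_atTop.2 fun B => ?_
  induction B with
  | zero => exact ⟨0, fun _ _ => Nat.zero_le _⟩
  | succ B ih =>
    obtain ⟨a, ha⟩ := ih
    obtain ⟨b, hb, hlt⟩ := frequently_atTop.1 hinc (max a K)
    exact ⟨b + 1, fun c hc =>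
      (ha b (le_of_max_le_left hb)).trans_lt (hlt.trans_le (hmono' (by omega) hc))⟩

section RoundCursor

variable {α : Type*} {L : ℕ → List α}

variable (L) in
/-- Walking through `L 0 ++ L 1 ++ ⋯`, `roundCursor L t = (k, l)` says that step `t` lies in
block `k`, of which `l` remains. -/
def roundCursor : ℕ → ℕ × List α
  | 0 => (0, L 0)
  | t + 1 =>
    if (roundCursor t).2.tail = [] then ((roundCursor t).1 + 1, L ((roundCursor t).1 + 1))
    else ((roundCursor t).1, (roundCursor t).2.tail)

lemma roundCursor_succ {t k : ℕ} {e : α} {l : List α} (h : roundCursor L t = (k, e :: l)) :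
    roundCursor L (t + 1) = if l = [] then (k + 1, L (k + 1)) else (k, l) := by
  simp [roundCursor, h]

lemma roundCursor_ne_nil (hL : ∀ k, L k ≠ []) (t : ℕ) : (roundCursor L t).2 ≠ [] := by
  induction t with
  | zero => exact hL 0
  | succ t ih =>
    rw [roundCursor]
    split_ifs with h
    exacts [hL _, h]

def flatRounds (hL : ∀ k, L k ≠ []) (t : ℕ) : α :=
  (roundCursor L t).2.head (roundCursor_ne_nil hL t)

lemma monotone_roundCursor_fst : Monotone fun t => (roundCursor L t).1 := by
  refine monotone_nat_of_le_succ fun t => ?_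
  rw [roundCursor]
  split_ifs <;> simp

lemma roundCursor_add_length {t k : ℕ} {l₁ l₂ : List α}
    (h : roundCursor L t = (k, l₁ ++ l₂)) (hl₂ : l₂ ≠ []) :
    roundCursor L (t + l₁.length) = (k, l₂) := by
  induction l₁ generalizing t with
  | nil => exact h
  | cons e l₁ ih =>
    rw [List.length_cons, ← add_assoc, add_right_comm]
    refine ih ?_
    simp [roundCursor_succ h, hl₂]

lemma roundCursor_add_length_eq {t k : ℕ} (h : roundCursor L t = (k, L k)) (hL : L k ≠ []) :
    roundCursor L (t + (L k).length) = (k + 1, L (k + 1)) := by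
  obtain ⟨l, e, hl⟩ := (List.eq_nil_or_concat (L k)).resolve_left hL
  have h' := roundCursor_add_length (h.trans (by rw [hl, List.concat_eq_append]))
    (List.cons_ne_nil e [])
  rw [hl, List.length_concat, ← add_assoc, roundCursor_succ h', if_pos rfl]

lemma exists_roundCursor_eq (hL : ∀ k, L k ≠ []) (k : ℕ) :
    ∃ t, k ≤ t ∧ roundCursor L t = (k, L k) := by
  induction k with
  | zero => exact ⟨0, le_rfl, rfl⟩
  | succ k ih =>
    obtain ⟨t, hkt, ht⟩ := ih
    refine ⟨t + (L k).length, ?_, roundCursor_add_length_eq ht (hL k)⟩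
    have := List.length_pos_of_ne_nil (hL k)
    omega

lemma exists_roundCursor_eq_cons (hL : ∀ k, L k ≠ []) {k : ℕ} {e : α} (he : e ∈ L k) :
    ∃ t l, k ≤ t ∧ roundCursor L t = (k, e :: l) := by
  obtain ⟨t, hkt, ht⟩ := exists_roundCursor_eq hL k
  obtain ⟨l₁, l₂, hl⟩ := List.append_of_mem he
  exact ⟨t + l₁.length, l₂, by omega,
    roundCursor_add_length (ht.trans (by rw [hl])) (List.cons_ne_nil e l₂)⟩

lemma frequently_flatRounds_eq (hL : ∀ k, L k ≠ []) {e : α}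
    (he : ∃ᶠ k in atTop, e ∈ L k) :
    ∃ᶠ t in atTop, flatRounds hL t = e := by
  rw [frequently_atTop] at he ⊢
  intro T
  obtain ⟨k, hTk, hk⟩ := he T
  obtain ⟨t, l, hkt, ht⟩ := exists_roundCursor_eq_cons hL hk
  exact ⟨t, hTk.trans hkt, by simp [flatRounds, ht]⟩

end RoundCursor

section Rounds

variable {Msg : Type*} {n : ℕ}

def Event.agent : Event n Msg → Fin n
  | .snd i => i
  | .rcv i _ => i

lemma Event.filter_agent_map_finRange {ev : Fin n → Event n Msg}
    (hev : ∀ i, (ev i).agent = i) (j : Fin n) :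
    ((List.finRange n).map ev).filter (·.agent = j) = [ev j] := by
  simp only [List.filter_map, Function.comp_def, hev, List.filter_eq,
    List.count_eq_one_of_mem (List.nodup_finRange n) (List.mem_finRange j)]
  rfl

noncomputable def roundEvents (n : ℕ) (D : Finset Msg) : List (Event n Msg) :=
  (List.finRange n).map .snd ++ D.toList.flatMap fun m => (List.finRange n).map (.rcv · m)

lemma snd_mem_roundEvents (D : Finset Msg) (i : Fin n) : Event.snd i ∈ roundEvents n D := by
  simp [roundEvents]

lemma rcv_mem_roundEvents {D : Finset Msg} {m : Msg} (hm : m ∈ D) (j : Fin n) :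
    Event.rcv j m ∈ roundEvents n D := by
  simp [roundEvents, hm]

end Rounds

abbrev Config (n : ℕ) (Msg St : Type*) : Type _ := (Fin n → St) × Multiset Msg

namespace Protocol

variable {A Msg St : Type*} [DecidableEq Msg] (P : Protocol A Msg St) {n : ℕ}

def applyEvent : Event n Msg → Config n Msg St → Config n Msg St
  | .snd i, c => (Function.update c.1 i (P.send (c.1 i)).2, (P.send (c.1 i)).1 ::ₘ c.2)
  | .rcv i m, c => (Function.update c.1 i (P.recv (c.1 i) m), c.2.erase m)

def applyList (l : List (Event n Msg)) (c : Config n Msg St) :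
    Config n Msg St :=
  l.foldl (fun c e => P.applyEvent e c) c

@[simp] lemma applyList_nil (c : Config n Msg St) : P.applyList [] c = c := rfl

@[simp] lemma applyList_cons (e : Event n Msg) (l : List (Event n Msg))
    (c : Config n Msg St) :
    P.applyList (e :: l) c = P.applyList l (P.applyEvent e c) := rfl

lemma applyList_append (l₁ l₂ : List (Event n Msg)) (c : Config n Msg St) :
    P.applyList (l₁ ++ l₂) c = P.applyList l₂ (P.applyList l₁ c) :=
  List.foldl_append ..

/-- Restricting sends to `M` is how sends of an execution are traced back to their rounds. -/
def Allowed (M : Set Msg) : Event n Msg → Config n Msg St → Prop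
  | .snd i, c => (P.send (c.1 i)).1 ∈ M
  | .rcv _ m, c => m ∈ c.2

lemma stepRel_applyEvent {M : Set Msg} {e : Event n Msg} {c : Config n Msg St}
    (h : P.Allowed M e c) : StepRel P e c (P.applyEvent e c) := by
  cases e with
  | snd i => exact ⟨rfl, rfl⟩
  | rcv i m => exact ⟨h, rfl, rfl⟩

def Admissible (M : Set Msg) : Config n Msg St → List (Event n Msg) → Prop
  | _, [] => True
  | c, e :: l => P.Allowed M e c ∧ Admissible M (P.applyEvent e c) l

lemma admissible_append {M : Set Msg} {c : Config n Msg St}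
    {l₁ l₂ : List (Event n Msg)} :
    P.Admissible M c (l₁ ++ l₂) ↔
      P.Admissible M c l₁ ∧ P.Admissible M (P.applyList l₁ c) l₂ := by
  induction l₁ generalizing c with
  | nil => simp [Admissible]
  | cons e l ih => simp [Admissible, ih, and_assoc]

def localStep (s : St) : Event n Msg → St
  | .snd _ => (P.send s).2
  | .rcv _ m => P.recv s m

lemma applyEvent_fst (e : Event n Msg) (c : Config n Msg St) :
    (P.applyEvent e c).1 = Function.update c.1 e.agent (P.localStep (c.1 e.agent) e) := by
  cases e <;> rfl

lemma applyList_fst_apply (l : List (Event n Msg)) (c : Config n Msg St)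
    (j : Fin n) :
    (P.applyList l c).1 j = (l.filter (·.agent = j)).foldl P.localStep (c.1 j) := by
  induction l generalizing c with
  | nil => rfl
  | cons e l ih =>
    rw [applyList_cons, ih, applyEvent_fst]
    by_cases hj : e.agent = j
    · subst hj
      simp
    · simp [hj, Function.update_of_ne (Ne.symm hj)]

lemma applyEvent_snd_fst_apply_of_ne {i j : Fin n} (h : j ≠ i) (c : Config n Msg St) :
    (P.applyEvent (.snd i) c).1 j = c.1 j :=
  Function.update_of_ne h ..

lemma admissible_map_snd {M : Set Msg} {l : List (Fin n)} (hl : l.Nodup)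
    {c : Config n Msg St} (h : ∀ i ∈ l, (P.send (c.1 i)).1 ∈ M) :
    P.Admissible M c (l.map .snd) := by
  induction l generalizing c with
  | nil => trivial
  | cons i l ih =>
    obtain ⟨hi, hl⟩ := List.nodup_cons.1 hl
    refine ⟨h i List.mem_cons_self, ih hl fun j hj => ?_⟩
    rw [P.applyEvent_snd_fst_apply_of_ne (ne_of_mem_of_not_mem hj hi)]
    exact h j (List.mem_cons_of_mem i hj)

lemma applyList_map_snd_transit {l : List (Fin n)} (hl : l.Nodup)
    (c : Config n Msg St) :
    (P.applyList (l.map .snd) c).2 = c.2 + ↑(l.map fun i => (P.send (c.1 i)).1) := by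
  induction l generalizing c with
  | nil => simp
  | cons i l ih =>
    obtain ⟨hi, hl⟩ := List.nodup_cons.1 hl
    have hagree : l.map (fun j => (P.send ((P.applyEvent (.snd i) c).1 j)).1) =
        l.map fun j => (P.send (c.1 j)).1 :=
      List.map_congr_left fun j hj => by
        rw [P.applyEvent_snd_fst_apply_of_ne (ne_of_mem_of_not_mem hj hi)]
    rw [List.map_cons, applyList_cons, ih hl, hagree, List.map_cons, ← Multiset.cons_coe,
      Multiset.add_cons]
    exact Multiset.cons_add ..

lemma applyList_map_rcv_transit (l : List (Fin n)) (m : Msg) (c : Config n Msg St) :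
    (P.applyList (l.map (.rcv · m)) c).2 = c.2 - .replicate l.length m := by
  induction l generalizing c with
  | nil => simp
  | cons i l ih =>
    rw [List.map_cons, applyList_cons, ih]
    simp [applyEvent, Multiset.sub_cons]

lemma admissible_map_rcv {M : Set Msg} (l : List (Fin n)) (m : Msg)
    {c : Config n Msg St} (h : l.length ≤ c.2.count m) :
    P.Admissible M c (l.map (.rcv · m)) := by
  induction l generalizing c with
  | nil => trivial
  | cons i l ih =>
    rw [List.length_cons] at h
    refine ⟨Multiset.count_pos.1 (by omega), ih ?_⟩
    change l.length ≤ (c.2.erase m).count m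
    rw [Multiset.count_erase_self]
    omega

lemma applyList_deliver_transit (L : List Msg) (c : Config n Msg St) :
    (P.applyList (L.flatMap fun m => (List.finRange n).map (.rcv · m)) c).2 =
      c.2 - n • ↑L := by
  induction L generalizing c with
  | nil => simp
  | cons m L ih =>
    rw [List.flatMap_cons, applyList_append, ih, applyList_map_rcv_transit, List.length_finRange,
      tsub_tsub, ← Multiset.cons_coe, Multiset.nsmul_cons, Multiset.nsmul_singleton]

lemma admissible_deliver {M : Set Msg} (L : List Msg) {c : Config n Msg St}
    (h : n • (L : Multiset Msg) ≤ c.2) :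
    P.Admissible M c (L.flatMap fun m => (List.finRange n).map (.rcv · m)) := by
  induction L generalizing c with
  | nil => trivial
  | cons m L ih =>
    rw [← Multiset.cons_coe, Multiset.nsmul_cons, Multiset.nsmul_singleton] at h
    rw [List.flatMap_cons, admissible_append]
    refine ⟨P.admissible_map_rcv _ m ?_, ih ?_⟩
    · rw [List.length_finRange]
      exact Multiset.le_count_iff_replicate_le.2 (le_of_add_le_left h)
    · rw [applyList_map_rcv_transit, List.length_finRange]
      exact le_tsub_of_add_le_left h

lemma applyList_roundEvents_fst_apply (D : Finset Msg) (c : Config n Msg St) (j : Fin n) :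
    (P.applyList (roundEvents n D) c).1 j = D.toList.foldl P.recv (P.send (c.1 j)).2 := by
  have hrcv (m : Msg) :
      ((List.finRange n).map (Event.rcv · m)).filter (·.agent = j) = [Event.rcv j m] :=
    Event.filter_agent_map_finRange (fun _ => rfl) j
  rw [applyList_fst_apply, roundEvents, List.filter_append, List.filter_flatMap,
    Event.filter_agent_map_finRange (fun _ => rfl)]
  simp [hrcv, ← List.map_eq_flatMap, List.foldl_map, localStep]

lemma applyList_roundEvents_transit (D : Finset Msg) (c : Config n Msg St) :
    (P.applyList (roundEvents n D) c).2 =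
      c.2 + ↑((List.finRange n).map fun i => (P.send (c.1 i)).1) - n • D.val := by
  rw [roundEvents, applyList_append, applyList_deliver_transit,
    applyList_map_snd_transit _ (List.nodup_finRange n), Finset.coe_toList]

lemma admissible_roundEvents {M : Set Msg} {D : Finset Msg} {c : Config n Msg St}
    (hM : ∀ i, (P.send (c.1 i)).1 ∈ M) (hD : n • D.val ≤ c.2) :
    P.Admissible M c (roundEvents n D) := by
  rw [roundEvents, admissible_append]
  refine ⟨P.admissible_map_snd (List.nodup_finRange n) fun i _ => hM i,
    P.admissible_deliver _ ?_⟩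
  rw [applyList_map_snd_transit _ (List.nodup_finRange n), Finset.coe_toList]
  exact hD.trans (Multiset.le_add_right _ _)

section RunRounds

variable (L : ℕ → List (Event n Msg))

def roundStart (x : Fin n → A) : ℕ → Config n Msg St
  | 0 => (fun i => P.init (x i), 0)
  | k + 1 => P.applyList (L k) (roundStart x k)

variable {L} (x : Fin n → A) (hL : ∀ k, L k ≠ [])

def runRoundsCfg : ℕ → Config n Msg St
  | 0 => (fun i => P.init (x i), 0)
  | t + 1 => P.applyEvent (flatRounds hL t) (runRoundsCfg t)

lemma exists_runRoundsCfg_eq_applyList (t : ℕ) :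
    ∃ l, l ++ (roundCursor L t).2 = L (roundCursor L t).1 ∧
      P.runRoundsCfg x hL t = P.applyList l (P.roundStart L x (roundCursor L t).1) := by
  induction t with
  | zero => exact ⟨[], rfl, rfl⟩
  | succ t ih =>
    obtain ⟨l₁, hpre, hcfg⟩ := ih
    obtain ⟨e, l, hl⟩ := List.exists_cons_of_ne_nil (roundCursor_ne_nil hL t)
    have hcfg' : P.runRoundsCfg x hL (t + 1) =
        P.applyList (l₁ ++ [e]) (P.roundStart L x (roundCursor L t).1) := by
      simp [runRoundsCfg, flatRounds, hl, hcfg, applyList_append]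
    have hcur := roundCursor_succ (Prod.ext rfl hl : roundCursor L t = (_, e :: l))
    rw [hl, ← List.singleton_append, ← List.append_assoc] at hpre
    split_ifs at hcur with hnil
    · subst hnil
      rw [List.append_nil] at hpre
      refine ⟨[], by rw [hcur]; rfl, ?_⟩
      rw [hcur, hcfg', hpre]
      rfl
    · exact ⟨l₁ ++ [e], by rw [hcur]; exact hpre, by rw [hcur]; exact hcfg'⟩

variable {M : ℕ → Set Msg} (hadm : ∀ k, P.Admissible (M k) (P.roundStart L x k) (L k))
include hadm

lemma allowed_flatRounds (t : ℕ) :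
    P.Allowed (M (roundCursor L t).1) (flatRounds hL t) (P.runRoundsCfg x hL t) := by
  obtain ⟨l, hpre, hcfg⟩ := P.exists_runRoundsCfg_eq_applyList x hL t
  have h := hadm (roundCursor L t).1
  rw [← hpre, admissible_append, ← hcfg] at h
  obtain ⟨e, l', hl⟩ := List.exists_cons_of_ne_nil (roundCursor_ne_nil hL t)
  rw [hl] at h
  simpa [flatRounds, hl] using h.2.1

def runRounds : Exec P n x where
  cfg := P.runRoundsCfg x hL
  ev := flatRounds hL
  init_cfg := rfl
  step t := P.stepRel_applyEvent (P.allowed_flatRounds x hL hadm t)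

lemma exists_runRounds_cfg_eq (k : ℕ) :
    ∃ t, k ≤ t ∧ (P.runRounds x hL hadm).cfg t = P.roundStart L x k := by
  obtain ⟨t, hkt, ht⟩ := exists_roundCursor_eq hL k
  obtain ⟨l, hpre, hcfg⟩ := P.exists_runRoundsCfg_eq_applyList x hL t
  rw [ht] at hpre hcfg
  rw [List.append_left_eq_self.1 hpre] at hcfg
  exact ⟨t, hkt, hcfg⟩

lemma frequently_mem_of_frequently_sendsAt {i : Fin n} {m : Msg}
    (h : ∃ᶠ t in atTop, SendsAt (P.runRounds x hL hadm) i m t) :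
    ∃ᶠ k in atTop, m ∈ M k := by
  rw [frequently_atTop] at h ⊢
  intro K
  obtain ⟨t₀, -, ht₀⟩ := exists_roundCursor_eq hL K
  obtain ⟨t, ht₀t, hev, rfl⟩ := h t₀
  have hallowed := P.allowed_flatRounds x hL hadm t
  change flatRounds hL t = _ at hev
  rw [hev] at hallowed
  refine ⟨(roundCursor L t).1, ?_, hallowed⟩
  simpa [ht₀] using monotone_roundCursor_fst (L := L) ht₀t

end RunRounds

end Protocol

/-- `state a` is the common state of the agents with input `a`; `pending` counts, for each
message, the rounds since its last delivery in which it was sent. -/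
structure SyncState (A Msg St : Type*) where
  state : A → St
  pending : Multiset Msg

def SyncState.ready {A Msg St : Type*} [DecidableEq Msg] (σ : SyncState A Msg St) (N : ℕ) :
    Finset Msg :=
  σ.pending.toFinset.filter fun m => N ≤ σ.pending.count m

namespace Protocol

variable {A Msg St : Type*} [DecidableEq Msg] (P : Protocol A Msg St) {n : ℕ}
variable (S : Finset A) (N : ℕ)

def sentMsgs (s : A → St) : Finset Msg := S.image fun a => (P.send (s a)).1

noncomputable def syncStep (σ : SyncState A Msg St) : SyncState A Msg St where
  state a := (σ.ready N).toList.foldl P.recv (P.send (σ.state a)).2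
  pending := σ.pending.filter (· ∉ σ.ready N) + (P.sentMsgs S σ.state).val

noncomputable def syncRun : ℕ → SyncState A Msg St
  | 0 => ⟨P.init, 0⟩
  | k + 1 => P.syncStep S N (syncRun k)

noncomputable def syncRounds (n k : ℕ) : List (Event n Msg) :=
  roundEvents n ((P.syncRun S N k).ready N)

variable {S N}

lemma syncRounds_ne_nil (hn : 0 < n) (k : ℕ) : P.syncRounds S N n k ≠ [] :=
  List.ne_nil_of_mem (snd_mem_roundEvents _ ⟨0, hn⟩)

lemma nsmul_ready_le {σ : SyncState A Msg St} {b : Multiset Msg} (hN : n ≤ N)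
    (hb : σ.pending ≤ b) : n • (σ.ready N).val ≤ b := by
  rw [Multiset.le_iff_count] at hb ⊢
  intro m
  have := hb m
  by_cases hm : m ∈ σ.ready N
  · have hNm := (Finset.mem_filter.1 hm).2
    rw [Multiset.count_nsmul, Multiset.count_eq_one_of_mem (σ.ready N).nodup hm]
    omega
  · simp [Multiset.count_eq_zero_of_notMem hm]

lemma pending_syncStep_le {x : Fin n → A} (hS : ∀ a ∈ S, ∃ i, x i = a) (hN : n ≤ N)
    {σ : SyncState A Msg St} {b : Multiset Msg} (hb : σ.pending ≤ b) :
    (P.syncStep S N σ).pending ≤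
      b + ↑((List.finRange n).map fun i => (P.send (σ.state (x i))).1) -
        n • (σ.ready N).val := by
  have hsent : (P.sentMsgs S σ.state).val ≤
      ↑((List.finRange n).map fun i => (P.send (σ.state (x i))).1) := by
    refine (Multiset.le_iff_subset (Finset.nodup _)).2 fun m hm => ?_
    obtain ⟨a, ha, rfl⟩ := Finset.mem_image.1 hm
    obtain ⟨i, rfl⟩ := hS a ha
    simp
  rw [Multiset.le_iff_count] at hb hsent ⊢
  intro m
  have hready (hm : m ∈ σ.ready N) : N ≤ σ.pending.count m := (Finset.mem_filter.1 hm).2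
  have hbm := hb m
  have hsentm := hsent m
  simp only [syncStep, Multiset.count_add, Multiset.count_sub, Multiset.count_nsmul,
    Multiset.count_filter, Multiset.count_eq_of_nodup (σ.ready N).nodup, Finset.mem_val]
  by_cases hm : m ∈ σ.ready N
  · have := hready hm
    simp only [hm, not_true_eq_false, ↓reduceIte]
    omega
  · simp only [hm, not_false_eq_true, ↓reduceIte]
    omega

lemma frequently_mem_ready {m : Msg}
    (h : ∃ᶠ k in atTop, m ∈ P.sentMsgs S (P.syncRun S N k).state) :
    ∃ᶠ k in atTop, m ∈ (P.syncRun S N k).ready N := by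
  by_contra hnot
  rw [not_frequently] at hnot
  have hcount {k : ℕ} (hk : m ∉ (P.syncRun S N k).ready N) :
      (P.syncRun S N (k + 1)).pending.count m = (P.syncRun S N k).pending.count m +
        if m ∈ P.sentMsgs S (P.syncRun S N k).state then 1 else 0 := by
    simp [syncRun, syncStep, hk, Multiset.count_eq_of_nodup (Finset.nodup _)]
  have htend : Tendsto (fun k => (P.syncRun S N k).pending.count m) atTop atTop :=
    Nat.tendsto_atTop_of_frequently_lt_succ
      (hnot.mono fun k hk => by rw [hcount hk]; omega)
      ((h.and_eventually hnot).mono fun k ⟨hs, hk⟩ => by rw [hcount hk, if_pos hs]; omega)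
  obtain ⟨k, hk, hready⟩ := ((htend.eventually_ge_atTop (N + 1)).and hnot).exists
  exact hready (Finset.mem_filter.2
    ⟨Multiset.mem_toFinset.2 (Multiset.count_pos.1 (by omega)), by omega⟩)

variable {x : Fin n → A} (hS : ∀ a, a ∈ S ↔ ∃ i, x i = a) (hN : n ≤ N)
include hS hN

lemma roundStart_syncRounds (k : ℕ) :
    (P.roundStart (P.syncRounds S N n) x k).1 = (P.syncRun S N k).state ∘ x ∧
      (P.syncRun S N k).pending ≤ (P.roundStart (P.syncRounds S N n) x k).2 := by
  induction k with
  | zero => exact ⟨rfl, Multiset.zero_le _⟩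
  | succ k ih =>
    obtain ⟨hstate, hpending⟩ := ih
    refine ⟨funext fun j => ?_, ?_⟩
    · rw [roundStart, syncRounds, applyList_roundEvents_fst_apply, hstate]
      rfl
    · rw [roundStart, syncRounds, applyList_roundEvents_transit, hstate]
      exact P.pending_syncStep_le (fun a ha => (hS a).1 ha) hN hpending

lemma admissible_syncRounds (k : ℕ) :
    P.Admissible (P.sentMsgs S (P.syncRun S N k).state : Set Msg)
      (P.roundStart (P.syncRounds S N n) x k) (P.syncRounds S N n k) := by
  obtain ⟨hstate, hpending⟩ := P.roundStart_syncRounds hS hN k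
  refine P.admissible_roundEvents (fun i => ?_) (nsmul_ready_le hN hpending)
  rw [hstate]
  exact Finset.mem_image_of_mem _ ((hS _).2 ⟨i, rfl⟩)

noncomputable def syncExec (hn : 0 < n) : Exec P n x :=
  P.runRounds x (P.syncRounds_ne_nil hn) (P.admissible_syncRounds hS hN)

lemma locallyFair_syncExec (hn : 0 < n) : LocallyFair (P.syncExec hS hN hn) := by
  have hL := P.syncRounds_ne_nil (S := S) (N := N) hn
  refine ⟨fun i T => ?_, fun m ⟨i, hi⟩ j T => ?_⟩
  · have hsnd := frequently_flatRounds_eq hL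
      (Frequently.of_forall fun k => snd_mem_roundEvents _ i)
    obtain ⟨t, hTt, ht⟩ := frequently_atTop.1 hsnd T
    exact ⟨t, hTt, Or.inl ht⟩
  · have hsent := P.frequently_mem_of_frequently_sendsAt x hL (P.admissible_syncRounds hS hN)
      (frequently_atTop.2 hi)
    have hrcv := frequently_flatRounds_eq hL
      ((P.frequently_mem_ready hsent).mono fun k hk => rcv_mem_roundEvents hk j)
    exact frequently_atTop.1 hrcv T

lemma exists_syncExec_cfg_eq (hn : 0 < n) (k : ℕ) :
    ∃ t, k ≤ t ∧ ((P.syncExec hS hN hn).cfg t).1 = (P.syncRun S N k).state ∘ x := by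
  obtain ⟨t, hkt, ht⟩ := P.exists_runRounds_cfg_eq x (P.syncRounds_ne_nil hn)
    (P.admissible_syncRounds hS hN) k
  exact ⟨t, hkt, (congrArg Prod.fst ht).trans (P.roundStart_syncRounds hS hN k).1⟩

end Protocol

theorem local_fairness_weak_general {A Msg St : Type*} [DecidableEq Msg]
    (P : Protocol A Msg St) (ψ : Multiset A → Bool)
    (h : StablyComputes P ψ)
    (n n' : ℕ) (hn : 0 < n) (hn' : 0 < n')
    (x : Fin n → A) (x' : Fin n' → A)
    (hsupp : ∀ a : A, (∃ i, x i = a) ↔ (∃ i, x' i = a)) :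
    ψ (inputMultiset x) = ψ (inputMultiset x') := by
  classical
  set S := Finset.univ.image x
  have hS : ∀ a, a ∈ S ↔ ∃ i, x i = a := by simp [S]
  have hS' : ∀ a, a ∈ S ↔ ∃ i, x' i = a := fun a => (hS a).trans (hsupp a)
  have hN : n ≤ n + n' := Nat.le_add_right n n'
  have hN' : n' ≤ n + n' := Nat.le_add_left n' n
  obtain ⟨T, hT⟩ := h n hn x _ (P.locallyFair_syncExec hS hN hn)
  obtain ⟨T', hT'⟩ := h n' hn' x' _ (P.locallyFair_syncExec hS' hN' hn')
  obtain ⟨t, ht, hcfg⟩ := P.exists_syncExec_cfg_eq hS hN hn (max T T')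
  obtain ⟨t', ht', hcfg'⟩ := P.exists_syncExec_cfg_eq hS' hN' hn' (max T T')
  obtain ⟨j, hj⟩ := (hsupp (x ⟨0, hn⟩)).1 ⟨⟨0, hn⟩, rfl⟩
  calc ψ (inputMultiset x) = P.out (((P.syncExec hS hN hn).cfg t).1 ⟨0, hn⟩) :=
        (hT t (le_of_max_le_left ht) _).symm
    _ = P.out (((P.syncExec hS' hN' hn').cfg t').1 j) := by rw [hcfg, hcfg']; simp [hj]
    _ = ψ (inputMultiset x') := hT' t' (le_of_max_le_right ht') j

/-- Any predicate stably computable in the anonymous asynchronous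
message-passing model with local fairness (even with unbounded states and
messages) is determined by the set of input values present. -/
theorem local_fairness_weak {A Msg St : Type*} [Countable A] [DecidableEq Msg]
    (P : Protocol A Msg St) (ψ : Multiset A → Bool)
    (h : StablyComputes P ψ)
    (n n' : ℕ) (hn : 0 < n) (hn' : 0 < n')
    (x : Fin n → A) (x' : Fin n' → A)
    (hsupp : ∀ a : A, (∃ i, x i = a) ↔ (∃ i, x' i = a)) :
    ψ (inputMultiset x) = ψ (inputMultiset x') :=
  local_fairness_weak_general P ψ h n n' hn hn' x x' hsupp
end

section
/- Let S ⊆ N^d be semilinear with S infinite. Then S contains an infinite linear subset; equivalently, there exist b ∈ S and a nonzero p ∈ N^d such that b + n·p ∈ S for all n ∈ N. Consequently, the set {(i,j) ∈ N² : j = i²} is not semilinear. -/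
/-! An infinite finite union has an infinite member; a linear set `b + ⟨P⟩` is infinite only if
some period `p ∈ P` is nonzero, and then the ray `b + ℕ • p` lies in it. On the parabola a ray
`b + n • p` would give `b₁ + n p₁ = (b₀ + n p₀)²` for all `n`: a linear function of `n` equal to
a quadratic one, which forces `p = 0`. -/

theorem AddSubmonoid.exists_mem_ne_zero_of_infinite_closure {M : Type*} [AddMonoid M] {s : Set M}
    (h : (closure s : Set M).Infinite) : ∃ p ∈ s, p ≠ 0 := by
  by_contra! hs
  have hbot : closure s ≤ ⊥ := closure_le.2 fun x hx => by simpa using hs x hx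
  exact h ((Set.finite_singleton 0).subset fun x hx => (mem_bot).1 (hbot hx))

theorem IsLinear.exists_ray_of_infinite {d : ℕ} {L : Set (Fin d → ℕ)} (hL : IsLinear L)
    (hinf : L.Infinite) : ∃ b ∈ L, ∃ p : Fin d → ℕ, p ≠ 0 ∧ ∀ n : ℕ, b + n • p ∈ L := by
  obtain ⟨b, P, rfl⟩ := hL
  obtain ⟨p, hpP, hp⟩ :=
    AddSubmonoid.exists_mem_ne_zero_of_infinite_closure (Set.Infinite.of_image _ hinf)
  refine ⟨b, ⟨0, zero_mem _, add_zero b⟩, p, hp, fun n => ⟨n • p, ?_, rfl⟩⟩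
  exact nsmul_mem (AddSubmonoid.subset_closure hpP) n

theorem IsSemilinear.exists_ray_of_infinite {d : ℕ} {S : Set (Fin d → ℕ)} (hS : IsSemilinear S)
    (hinf : S.Infinite) : ∃ b ∈ S, ∃ p : Fin d → ℕ, p ≠ 0 ∧ ∀ n : ℕ, b + n • p ∈ S := by
  obtain ⟨k, L, hL, rfl⟩ := hS
  obtain ⟨i, hi⟩ : ∃ i, (L i).Infinite := by
    by_contra! h
    exact hinf (Set.finite_iUnion h)
  obtain ⟨b, hb, p, hp, hray⟩ := (hL i).exists_ray_of_infinite hi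
  exact ⟨b, Set.mem_iUnion_of_mem i hb, p, hp, fun n => Set.mem_iUnion_of_mem i (hray n)⟩

theorem Nat.eq_zero_of_forall_add_mul_eq_sq {a b c e : ℕ}
    (h : ∀ n, a + n * c = (b + n * e) ^ 2) : e = 0 ∧ c = 0 := by
  have he : e = 0 := by
    by_contra he
    -- at `n = a + c + 1` the square is at least `n * n = n * (a + c + 1) > a + n * c`
    set n := a + c + 1
    have hn : n ≤ b + n * e := (Nat.le_mul_of_pos_right n (Nat.pos_of_ne_zero he)).trans
      (Nat.le_add_left _ _)
    have hsq : n * n ≤ (b + n * e) ^ 2 := by nlinarith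
    have hlt : a + n * c < n * n := calc
      a + n * c < n * a + n * c + n := by
        have : a ≤ n * a := Nat.le_mul_of_pos_left a (Nat.succ_pos _)
        omega
      _ = n * n := by ring
    linarith [h n]
  refine ⟨he, ?_⟩
  have h0 := h 0
  have h1 := h 1
  simp only [he, mul_zero, add_zero, zero_mul, one_mul] at h0 h1
  omega

theorem parabola_infinite : {v : Fin 2 → ℕ | v 1 = v 0 ^ 2}.Infinite :=
  Set.infinite_of_injective_forall_mem (f := fun i : ℕ => ![i, i ^ 2])
    (fun i j hij => by simpa using congrFun hij 0) (fun i => by simp)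

theorem not_isSemilinear_parabola : ¬ IsSemilinear {v : Fin 2 → ℕ | v 1 = v 0 ^ 2} := by
  intro hS
  obtain ⟨b, -, p, hp, hray⟩ := hS.exists_ray_of_infinite parabola_infinite
  obtain ⟨h0, h1⟩ : p 0 = 0 ∧ p 1 = 0 :=
    Nat.eq_zero_of_forall_add_mul_eq_sq (fun n => by simpa using hray n)
  exact hp (funext fun i => by fin_cases i <;> assumption)

/-- Every infinite semilinear subset of ℕ^d contains an infinite linear subset
(an arithmetic ray b + n·p with p ≠ 0); consequently the parabola
{(i,j) : j = i²} is not semilinear. -/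
theorem semilinear_pumping_and_parabola :
    (∀ (d : ℕ) (S : Set (Fin d → ℕ)), IsSemilinear S → S.Infinite →
      ∃ b ∈ S, ∃ p : Fin d → ℕ, p ≠ 0 ∧ ∀ n : ℕ, b + n • p ∈ S) ∧
    ¬ IsSemilinear {v : Fin 2 → ℕ | v 1 = (v 0) ^ 2} :=
  ⟨fun _ _ hS hinf => hS.exists_ray_of_infinite hinf, not_isSemilinear_parabola⟩
end
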